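/- Fix the order N < D < E. With φ defined as follows on bad paths W in Del(n,n,l): letting w_k be the first deepest step and W_1 the maximal window of D's around it (r D's before, s D's after), replace W_1 by D^{r-1} E D^{s+1} if r ≥ 1 and by D^s E if r = 0. Then φ is a bijection onto Del(n+1,n-1,l) with maj(W) = maj(φ(W)) for all bad W. -/

import Mathlib

inductive Step : Type
  | E | D | N
deriving DecidableEq

instance : Fintype Step := ⟨{Step.E, Step.D, Step.N}, fun x => by cases x <;> decide⟩

open Step Polynomial

/-- All words of length `l` over the step alphabet. -/
def Words (l : ℕ) : Finset (List Step) :=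
  (Finset.univ : Finset (Fin l → Step)).image List.ofFn

/-- Delannoy paths from (0,0) to (m,n) with `l` steps, encoded as words:
`#E + #D = m`, `#N + #D = n`, length `l`. -/
def DelSet (m n l : ℕ) : Finset (List Step) :=
  (Words l).filter fun w => w.count E + w.count D = m ∧ w.count N + w.count D = n

/-- A word is bad if some prefix contains more N's than E's. -/
def bad (w : List Step) : Bool :=
  (List.range (w.length + 1)).any fun k => (w.take k).count E < (w.take k).count N

/-- Bad Delannoy paths from (0,0) to (n,n) with `l` steps. -/
def BDelSet (n l : ℕ) : Finset (List Step) :=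
  (DelSet n n l).filter fun w => bad w

/-- Schröder paths: Delannoy paths to (n,n) never going above the diagonal. -/
def SchSet (n l : ℕ) : Finset (List Step) :=
  (DelSet n n l).filter fun w => ¬ bad w

/-- Major index of a word w_1 ⋯ w_l with respect to a ranking of the letters:
the sum of all positions i (1 ≤ i ≤ l-1) with w_i > w_{i+1}. -/
def maj (rank : Step → ℕ) (w : List Step) : ℕ :=
  ∑ i ∈ Finset.range (w.length - 1),
    if rank (w.getD (i + 1) E) < rank (w.getD i E) then i + 1 else 0

/-- q-integer [m] = 1 + q + ⋯ + q^{m-1}. -/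
noncomputable def qint (m : ℕ) : Polynomial ℚ :=
  ∑ i ∈ Finset.range m, X ^ i

/-- q-factorial. -/
noncomputable def qfact : ℕ → Polynomial ℚ
  | 0 => 1
  | m + 1 => qfact m * qint (m + 1)

/-- Gaussian binomial coefficient, via the q-Pascal recurrence. -/
noncomputable def qbinom : ℕ → ℕ → Polynomial ℚ
  | _, 0 => 1
  | 0, _ + 1 => 0
  | m + 1, k + 1 => qbinom m k + X ^ (k + 1) * qbinom m (k + 1)

/-- q-trinomial coefficient [l]!/([a]![b]![c]!), defined when a+b+c = l. -/
noncomputable def qbinom3 (l a b c : ℕ) : Polynomial ℚ :=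
  if a + b + c = l then qbinom l a * qbinom (l - a) b else 0

/-- Depth after the first `i` steps: #N − #E. -/
def depth (w : List Step) (i : ℕ) : ℤ :=
  ((w.take i).count N : ℤ) - (w.take i).count E

/-- `k` (0 ≤ k ≤ l) achieves the maximal running depth. -/
def isMaxDepth (w : List Step) (k : ℕ) : Bool :=
  (List.range (w.length + 1)).all fun i => decide (depth w i ≤ depth w k)

/-- The first index (number of steps) at which the running depth is maximal. -/
def firstDeep (w : List Step) : ℕ :=
  (List.range (w.length + 1)).findIdx (isMaxDepth w)

/-- The last index at which the running depth is maximal. -/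
def lastDeep (w : List Step) : ℕ :=
  w.length - (List.range (w.length + 1)).reverse.findIdx (isMaxDepth w)

/-- Replace the first deepest step (the step w_k, k = firstDeep) with E. -/
def phi (w : List Step) : List Step := w.set (firstDeep w - 1) E

/-- Replace the step following the last deepest point with N. -/
def phiInv (w : List Step) : List Step := w.set (lastDeep w) N

/-- Number of consecutive D's immediately after the first deepest step. -/
def runS (w : List Step) : ℕ := ((w.drop (firstDeep w)).takeWhile (· == D)).length

/-- Number of consecutive D's immediately before the first deepest step. -/
def runR (w : List Step) : ℕ :=
  ((w.take (firstDeep w - 1)).reverse.takeWhile (· == D)).length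

/-- The window map: replace W₁ = D^r w_k D^s by D^{r-1} E D^{s+1} if r ≥ 1,
and by D^s E if r = 0. -/
def phiWin (w : List Step) : List Step :=
  let k := firstDeep w - 1
  let r := runR w
  let s := runS w
  let seg : List Step :=
    if 1 ≤ r then List.replicate (r - 1) D ++ [E] ++ List.replicate (s + 1) D
    else List.replicate s D ++ [E]
  w.take (k - r) ++ seg ++ w.drop (k + s + 1)

/-- 0-based index of the first step after which the path is above the diagonal. -/
def firstAbove (w : List Step) : ℕ :=
  (List.range w.length).findIdx fun i =>
    decide ((w.take (i + 1)).count E < (w.take (i + 1)).count N)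

/-- The map ψ of Bonin–Shapiro–Simion: replace with E the last N of the maximal
run of consecutive N's beginning at the first step going above the diagonal. -/
def psi (w : List Step) : List Step :=
  let i := firstAbove w
  let j := i + ((w.drop i).takeWhile (· == N)).length - 1
  w.set j E

/-!
A bad path attains its maximal depth for the first time right after an `N`, so around that step
it factors as `A ++ Dʳ N Dˢ ++ B` with `A, B` *flanking* the window: no prefix of `A` is deeper
than `A`, no prefix of `B` has positive depth, and neither `A` ends nor `B` starts with a `D`.
The window map keeps `A` and `B` and turns the window into `Dᵖ E D^q` (`p + q = r + s`); in the
new path the point just before that `E` is the *last* deepest point, and the flanking conditions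
are the same, so reading the window off there inverts the map. A flanking `A` ends with `N` and a
flanking `B` starts with `E`, the extreme letters for `N < D < E`, so no descent straddles the
window; inside it, the descent `D > N` at position `r - 1` (present iff `r ≥ 1`) becomes the
descent `E > D` at the same position, and `maj` is unchanged.
-/

namespace Delannoy

open List

def totalDepth (w : List Step) : ℤ := (w.count N : ℤ) - w.count E

theorem depth_eq_totalDepth_take (w : List Step) (i : ℕ) :
    depth w i = totalDepth (w.take i) := rfl

@[simp] theorem totalDepth_nil : totalDepth [] = 0 := rfl

@[simp] theorem totalDepth_append (u v : List Step) :
    totalDepth (u ++ v) = totalDepth u + totalDepth v := by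
  simp only [totalDepth, count_append]; push_cast; ring

@[simp] theorem totalDepth_singleton_N : totalDepth [N] = 1 := rfl

@[simp] theorem totalDepth_singleton_D : totalDepth [D] = 0 := rfl

@[simp] theorem totalDepth_singleton_E : totalDepth [E] = -1 := rfl

@[simp] theorem totalDepth_replicate_D (k : ℕ) : totalDepth (replicate k D) = 0 := by
  simp [totalDepth, count_replicate]

theorem depth_eq_depth_min_length (w : List Step) (i : ℕ) :
    depth w i = depth w (min i w.length) := by
  simp only [depth_eq_totalDepth_take, ← take_eq_take_min]

theorem depth_succ {w : List Step} {i : ℕ} (h : i < w.length) :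
    depth w (i + 1) = depth w i + totalDepth [w[i]] := by
  rw [depth_eq_totalDepth_take, depth_eq_totalDepth_take, take_add_one, getElem?_eq_getElem h,
    Option.toList_some, totalDepth_append]

theorem bad_iff {w : List Step} : bad w = true ↔ ∃ i ≤ w.length, 0 < depth w i := by
  simp only [bad, any_eq_true, mem_range, Nat.lt_succ_iff, decide_eq_true_eq, depth]
  exact exists_congr fun i => and_congr_right fun _ => by omega

theorem mem_Words_iff {l : ℕ} {w : List Step} : w ∈ Words l ↔ w.length = l := by
  simp only [Words, Finset.mem_image, Finset.mem_univ, true_and]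
  constructor
  · rintro ⟨f, rfl⟩
    exact length_ofFn
  · rintro rfl
    exact ⟨w.get, ofFn_get w⟩

theorem mem_DelSet_iff {m k l : ℕ} {w : List Step} :
    w ∈ DelSet m k l ↔
      w.length = l ∧ w.count E + w.count D = m ∧ w.count N + w.count D = k := by
  rw [DelSet, Finset.mem_filter, mem_Words_iff]

theorem totalDepth_of_mem_DelSet {m k l : ℕ} {w : List Step} (h : w ∈ DelSet m k l) :
    totalDepth w = k - m := by
  obtain ⟨-, hm, hk⟩ := mem_DelSet_iff.1 h
  simp only [totalDepth]
  omega

def window (x : Step) (r s : ℕ) : List Step := replicate r D ++ x :: replicate s D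

@[simp] theorem length_window (x : Step) (r s : ℕ) : (window x r s).length = r + s + 1 := by
  simp [window]; omega

theorem totalDepth_take_window (x : Step) (r s j : ℕ) :
    totalDepth ((window x r s).take j) = if j ≤ r then 0 else totalDepth [x] := by
  rw [window, take_append, take_replicate, length_replicate]
  split_ifs with h
  · simp [Nat.sub_eq_zero_of_le h]
  · obtain ⟨m, hm⟩ : ∃ m, j - r = m + 1 := ⟨j - r - 1, by omega⟩
    rw [hm, take_succ_cons, ← singleton_append, totalDepth_append, take_replicate,
      totalDepth_replicate_D, totalDepth_append, totalDepth_replicate_D, zero_add, add_zero]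

theorem depth_append_window (A B : List Step) (x : Step) (r s i : ℕ) :
    depth (A ++ window x r s ++ B) i =
      totalDepth (A.take i) + (if i ≤ A.length + r then 0 else totalDepth [x]) +
        totalDepth (B.take (i - (A.length + r + s + 1))) := by
  rw [depth_eq_totalDepth_take, append_assoc, take_append, take_append, totalDepth_append,
    totalDepth_append, totalDepth_take_window, length_window, Nat.sub_sub]
  simp only [Nat.sub_le_iff_le_add', add_assoc]

theorem depth_append_window_of_le (A B : List Step) (x : Step) {r s i : ℕ}
    (hi : i ≤ A.length + r) : depth (A ++ window x r s ++ B) i = totalDepth (A.take i) := by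
  rw [depth_append_window, if_pos hi, Nat.sub_eq_zero_of_le (by omega)]
  simp

theorem depth_append_window_succ (A B : List Step) (x : Step) (r s : ℕ) :
    depth (A ++ window x r s ++ B) (A.length + r + 1) = totalDepth A + totalDepth [x] := by
  rw [depth_append_window, if_neg (by omega), Nat.sub_eq_zero_of_le (by omega),
    take_of_length_le (by omega)]
  simp

theorem depth_append_window_add (A B : List Step) (x : Step) (r s i : ℕ) :
    depth (A ++ window x r s ++ B) (A.length + r + s + 1 + i) =
      totalDepth A + totalDepth [x] + totalDepth (B.take i) := by
  rw [depth_append_window, if_neg (by omega), take_of_length_le (by omega),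
    Nat.add_sub_cancel_left]

theorem append_window_mem_DelSet_iff {A B : List Step} {m k l p q r s : ℕ}
    (hpq : p + q = r + s) :
    A ++ window E p q ++ B ∈ DelSet (m + 1) k l ↔
      A ++ window N r s ++ B ∈ DelSet m (k + 1) l := by
  simp only [mem_DelSet_iff, window, length_append, length_replicate, length_cons, count_append,
    count_cons, count_replicate]
  simp
  omega

theorem isMaxDepth_iff {w : List Step} {k : ℕ} :
    isMaxDepth w k = true ↔ ∀ i, depth w i ≤ depth w k := by
  simp only [isMaxDepth, all_eq_true, mem_range, Nat.lt_succ_iff, decide_eq_true_eq]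
  refine ⟨fun h i => ?_, fun h i _ => h i⟩
  rw [depth_eq_depth_min_length]
  exact h _ (min_le_right _ _)

theorem exists_forall_depth_le (w : List Step) : ∃ k ≤ w.length, ∀ i, depth w i ≤ depth w k := by
  obtain ⟨k, hk, h⟩ := (Finset.range (w.length + 1)).exists_max_image (depth w) ⟨0, by simp⟩
  refine ⟨k, Nat.lt_succ_iff.1 (Finset.mem_range.1 hk), fun i => ?_⟩
  rw [depth_eq_depth_min_length]
  exact h _ (Finset.mem_range.2 (Nat.lt_succ_of_le (min_le_right _ _)))

theorem firstDeep_eq_of {w : List Step} {k : ℕ} (hk : k ≤ w.length)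
    (hmax : ∀ i, depth w i ≤ depth w k) (hfirst : ∀ j < k, depth w j < depth w k) :
    firstDeep w = k := by
  rw [firstDeep, findIdx_eq (by simpa [Nat.lt_succ_iff])]
  simp only [getElem_range]
  refine ⟨isMaxDepth_iff.2 hmax, fun j hj => Bool.eq_false_iff.2 fun hj' => ?_⟩
  exact (hfirst j hj).not_ge (isMaxDepth_iff.1 hj' k)

theorem firstDeep_spec (w : List Step) :
    firstDeep w ≤ w.length ∧ (∀ i, depth w i ≤ depth w (firstDeep w)) ∧
      ∀ j < firstDeep w, depth w j < depth w (firstDeep w) := by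
  classical
  have hex : ∃ k, ∀ i, depth w i ≤ depth w k := (exists_forall_depth_le w).imp fun _ h => h.2
  have hk : Nat.find hex ≤ w.length := by
    obtain ⟨k, hk, hmax⟩ := exists_forall_depth_le w
    exact (Nat.find_min' hex hmax).trans hk
  have hfirst : ∀ j < Nat.find hex, depth w j < depth w (Nat.find hex) := fun j hj => by
    obtain ⟨i, hi⟩ := not_forall.1 (Nat.find_min hex hj)
    exact (not_le.1 hi).trans_le (Nat.find_spec hex i)
  rw [firstDeep_eq_of hk (Nat.find_spec hex) hfirst]
  exact ⟨hk, Nat.find_spec hex, hfirst⟩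

theorem lastDeep_eq_of {w : List Step} {k : ℕ} (hk : k ≤ w.length)
    (hmax : ∀ i, depth w i ≤ depth w k)
    (hlast : ∀ j ≤ w.length, k < j → depth w j < depth w k) :
    lastDeep w = k := by
  suffices (range (w.length + 1)).reverse.findIdx (isMaxDepth w) = w.length - k by
    rw [lastDeep, this]
    omega
  rw [findIdx_eq (by simp)]
  simp only [getElem_reverse, getElem_range, length_range]
  refine ⟨?_, fun j hj => Bool.eq_false_iff.2 fun hj' => ?_⟩
  · rw [show w.length + 1 - 1 - (w.length - k) = k by omega]
    exact isMaxDepth_iff.2 hmax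
  · exact (hlast _ (by omega) (by omega)).not_ge (isMaxDepth_iff.1 hj' k)

theorem lastDeep_spec (w : List Step) :
    lastDeep w ≤ w.length ∧ (∀ i, depth w i ≤ depth w (lastDeep w)) ∧
      ∀ j ≤ w.length, lastDeep w < j → depth w j < depth w (lastDeep w) := by
  classical
  obtain ⟨k, hk, hmaxk⟩ := exists_forall_depth_le w
  set K := Nat.findGreatest (fun k => ∀ i, depth w i ≤ depth w k) w.length
  have hmax : ∀ i, depth w i ≤ depth w K :=
    Nat.findGreatest_spec (P := fun k => ∀ i, depth w i ≤ depth w k) hk hmaxk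
  have hlast : ∀ j ≤ w.length, K < j → depth w j < depth w K := fun j hj hKj => by
    obtain ⟨i, hi⟩ := not_forall.1 (Nat.findGreatest_is_greatest hKj hj)
    exact (not_le.1 hi).trans_le (hmax i)
  rw [lastDeep_eq_of (Nat.findGreatest_le _) hmax hlast]
  exact ⟨Nat.findGreatest_le _, hmax, hlast⟩

theorem replicate_append_dropWhile (L : List Step) :
    replicate (L.takeWhile (· == D)).length D ++ L.dropWhile (· == D) = L := by
  conv_rhs => rw [← takeWhile_append_dropWhile (p := (· == D)) (l := L)]
  congr 1
  exact (eq_replicate_iff.2 ⟨rfl, fun b hb => by simpa using mem_takeWhile_imp hb⟩).symm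

theorem head?_dropWhile_ne_D (L : List Step) : (L.dropWhile (· == D)).head? ≠ some D := by
  intro h
  simpa [h] using head?_dropWhile_not (· == D) L

theorem length_takeWhile_replicate_append {L : List Step} (hL : L.head? ≠ some D) (r : ℕ) :
    ((replicate r D ++ L).takeWhile (· == D)).length = r := by
  induction r with
  | zero =>
    cases L with
    | nil => rfl
    | cons x L => simpa [takeWhile_cons] using hL
  | succ r ih => rw [replicate_succ, cons_append, takeWhile_cons_of_pos (by rfl), length_cons, ih]

theorem exists_eq_append_window (w : List Step) {k : ℕ} (hk : k < w.length) :
    ∃ A B r s, w = A ++ window w[k] r s ++ B ∧ A.length + r = k ∧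
      A.getLast? ≠ some D ∧ B.head? ≠ some D := by
  set P := (w.take k).reverse
  set T := w.drop (k + 1)
  have hP : w.take k =
      (P.dropWhile (· == D)).reverse ++ replicate (P.takeWhile (· == D)).length D := by
    rw [← reverse_replicate, ← reverse_append, replicate_append_dropWhile, reverse_reverse]
  refine ⟨(P.dropWhile (· == D)).reverse, T.dropWhile (· == D), (P.takeWhile (· == D)).length,
    (T.takeWhile (· == D)).length, ?_, ?_, by simpa using head?_dropWhile_ne_D P,
    head?_dropWhile_ne_D T⟩
  · rw [window, append_assoc, append_assoc, cons_append, replicate_append_dropWhile,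
      ← append_assoc, ← hP, getElem_cons_drop, take_append_drop]
  · have := congrArg length hP
    simp only [length_take, length_append, length_replicate] at this
    omega

section Window

variable {A B : List Step} {x : Step} {r s : ℕ}

theorem runs_append_window (hA : A.getLast? ≠ some D) (hB : B.head? ≠ some D) :
    (((A ++ window x r s ++ B).take (A.length + r)).reverse.takeWhile (· == D)).length = r ∧
      (((A ++ window x r s ++ B).drop (A.length + r + 1)).takeWhile (· == D)).length = s := by
  have htake : (A ++ window x r s ++ B).take (A.length + r) = A ++ replicate r D := by
    rw [window, append_assoc, append_assoc, ← append_assoc A]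
    exact take_left' (by simp)
  have hdrop : (A ++ window x r s ++ B).drop (A.length + r + 1) = replicate s D ++ B := by
    have : A ++ window x r s ++ B = (A ++ replicate r D ++ [x]) ++ (replicate s D ++ B) := by
      simp [window]
    exact this ▸ drop_left' (by simp; omega)
  rw [htake, hdrop, reverse_append, reverse_replicate]
  exact ⟨length_takeWhile_replicate_append (by rwa [head?_reverse]) r,
    length_takeWhile_replicate_append hB s⟩

theorem take_append_drop_append_window (seg : List Step) :
    (A ++ window x r s ++ B).take A.length ++ seg ++
      (A ++ window x r s ++ B).drop (A.length + r + s + 1) = A ++ seg ++ B := by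
  rw [drop_left' (l₁ := A ++ window x r s) (by simp; omega), append_assoc A,
    take_left' rfl]

end Window

def phiWindow (r s : ℕ) : List Step :=
  if 1 ≤ r then window E (r - 1) (s + 1) else window E s 0

def phiWindowInv (p q : ℕ) : List Step :=
  if 1 ≤ q then window N (p + 1) (q - 1) else window N 0 p

theorem exists_phiWindow_eq (r s : ℕ) :
    ∃ p q, phiWindow r s = window E p q ∧ p + q = r + s ∧
      phiWindowInv p q = window N r s := by
  unfold phiWindow phiWindowInv
  split_ifs with hr
  · refine ⟨r - 1, s + 1, rfl, by omega, ?_⟩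
    rw [if_pos (by omega), Nat.sub_add_cancel hr, Nat.add_sub_cancel]
  · refine ⟨s, 0, rfl, by omega, ?_⟩
    rw [if_neg (by omega), show r = 0 by omega]

theorem exists_phiWindowInv_eq (p q : ℕ) :
    ∃ r s, phiWindowInv p q = window N r s ∧ r + s = p + q ∧
      phiWindow r s = window E p q := by
  unfold phiWindow phiWindowInv
  split_ifs with hq
  · refine ⟨p + 1, q - 1, rfl, by omega, ?_⟩
    rw [if_pos (by omega), Nat.add_sub_cancel, Nat.sub_add_cancel hq]
  · refine ⟨0, p, rfl, by omega, ?_⟩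
    rw [if_neg (by omega), show q = 0 by omega]

theorem length_phiWindow (r s : ℕ) : (phiWindow r s).length = r + s + 1 := by
  unfold phiWindow
  split_ifs <;> simp <;> omega

def phiWinInv (v : List Step) : List Step :=
  let j := lastDeep v
  let p := ((v.take j).reverse.takeWhile (· == D)).length
  let q := ((v.drop (j + 1)).takeWhile (· == D)).length
  v.take (j - p) ++ phiWindowInv p q ++ v.drop (j + q + 1)

structure Flanked (A B : List Step) : Prop where
  totalDepth_take_le : ∀ i, totalDepth (A.take i) ≤ totalDepth A
  totalDepth_take_nonpos : ∀ i, totalDepth (B.take i) ≤ 0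
  getLast?_ne_D : A.getLast? ≠ some D
  head?_ne_D : B.head? ≠ some D

namespace Flanked

variable {A B : List Step} (h : Flanked A B)
include h

theorem totalDepth_nonneg : 0 ≤ totalDepth A := by
  simpa using h.totalDepth_take_le 0

theorem getLast?_eq_N : ∀ a ∈ A.getLast?, a = N := by
  intro a ha
  obtain ⟨A₀, rfl⟩ := getLast?_eq_some_iff.1 ha
  have hle := h.totalDepth_take_le A₀.length
  rw [take_left' rfl, totalDepth_append] at hle
  cases a
  · simp at hle
  · exact absurd ha h.getLast?_ne_D
  · rfl

theorem head?_eq_E : ∀ b ∈ B.head?, b = E := by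
  intro b hb
  obtain ⟨B₀, rfl⟩ := head?_eq_some_iff.1 hb
  have hle := h.totalDepth_take_nonpos 1
  cases b
  · rfl
  · exact absurd hb h.head?_ne_D
  · simp at hle

theorem firstDeep_append_window (r s : ℕ) :
    firstDeep (A ++ window N r s ++ B) = A.length + r + 1 := by
  have hpeak := depth_append_window_succ A B N r s
  rw [totalDepth_singleton_N] at hpeak
  apply firstDeep_eq_of (by simp; omega)
  · intro i
    have hA := h.totalDepth_take_le i
    have hB := h.totalDepth_take_nonpos (i - (A.length + r + s + 1))
    rw [hpeak, depth_append_window]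
    split_ifs <;> simp <;> omega
  · intro j hj
    rw [hpeak, depth_append_window_of_le A B N (by omega)]
    linarith [h.totalDepth_take_le j]

theorem bad_append_window (r s : ℕ) : bad (A ++ window N r s ++ B) = true := by
  refine bad_iff.2 ⟨A.length + r + 1, by simp; omega, ?_⟩
  rw [depth_append_window_succ, totalDepth_singleton_N]
  linarith [h.totalDepth_nonneg]

theorem phiWin_append_window (r s : ℕ) :
    phiWin (A ++ window N r s ++ B) = A ++ phiWindow r s ++ B := by
  obtain ⟨hr, hs⟩ := runs_append_window (x := N) (r := r) (s := s) h.getLast?_ne_D h.head?_ne_D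
  simp only [phiWin, runR, runS, h.firstDeep_append_window, Nat.add_sub_cancel, hr, hs]
  have hseg : (if 1 ≤ r then replicate (r - 1) D ++ [E] ++ replicate (s + 1) D
      else replicate s D ++ [E]) = phiWindow r s := by
    unfold phiWindow window
    split_ifs <;> simp
  rw [hseg]
  exact take_append_drop_append_window _

theorem lastDeep_append_window (p q : ℕ) :
    lastDeep (A ++ window E p q ++ B) = A.length + p := by
  have hpeak := depth_append_window_of_le A B E (s := q) (le_refl (A.length + p))
  rw [take_of_length_le (by omega)] at hpeak
  apply lastDeep_eq_of (by simp; omega)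
  · intro i
    have hA := h.totalDepth_take_le i
    have hB := h.totalDepth_take_nonpos (i - (A.length + p + q + 1))
    rw [hpeak, depth_append_window]
    split_ifs <;> simp <;> omega
  · intro j _ hj
    have hA := h.totalDepth_take_le j
    have hB := h.totalDepth_take_nonpos (j - (A.length + p + q + 1))
    rw [hpeak, depth_append_window, if_neg (by omega)]
    simp
    omega

theorem phiWinInv_append_window (p q : ℕ) :
    phiWinInv (A ++ window E p q ++ B) = A ++ phiWindowInv p q ++ B := by
  obtain ⟨hp, hq⟩ := runs_append_window (x := E) (r := p) (s := q) h.getLast?_ne_D h.head?_ne_D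
  simp only [phiWinInv, h.lastDeep_append_window, hp, hq, Nat.add_sub_cancel]
  exact take_append_drop_append_window _

end Flanked

theorem exists_flanked_of_bad {w : List Step} (hw : bad w = true) :
    ∃ A B r s, Flanked A B ∧ w = A ++ window N r s ++ B := by
  obtain ⟨hK, hmax, hfirst⟩ := firstDeep_spec w
  generalize firstDeep w = K at hK hmax hfirst
  have hpos : 0 < depth w K := by
    obtain ⟨i, -, hi⟩ := bad_iff.1 hw
    exact hi.trans_le (hmax i)
  have hK1 : 1 ≤ K := by
    refine Nat.one_le_iff_ne_zero.2 fun hK0 => ?_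
    simp [hK0, depth_eq_totalDepth_take] at hpos
  have hstep := depth_succ (w := w) (i := K - 1) (by omega)
  rw [Nat.sub_add_cancel hK1] at hstep
  have hN : w[K - 1] = N := by
    have hlt := hfirst (K - 1) (by omega)
    cases hx : w[K - 1]
    · rw [hx, totalDepth_singleton_E] at hstep; omega
    · rw [hx, totalDepth_singleton_D] at hstep; omega
    · rfl
  obtain ⟨A, B, r, s, hw', hk, hA, hB⟩ := exists_eq_append_window w (k := K - 1) (by omega)
  rw [hN] at hw'
  subst hw'
  have hpeak : depth (A ++ window N r s ++ B) K = totalDepth A + 1 := by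
    rw [show K = A.length + r + 1 by omega, depth_append_window_succ, totalDepth_singleton_N]
  refine ⟨A, B, r, s, ⟨fun i => ?_, fun i => ?_, hA, hB⟩, rfl⟩
  · have hlt := hfirst (min i A.length) (by omega)
    rw [hpeak, depth_append_window_of_le A B N (by omega), ← take_eq_take_min] at hlt
    omega
  · have hle := hmax (A.length + r + s + 1 + i)
    rw [hpeak, depth_append_window_add, totalDepth_singleton_N] at hle
    omega

theorem exists_flanked_of_totalDepth_neg {v : List Step} (hv : totalDepth v < 0) :
    ∃ A B p q, Flanked A B ∧ v = A ++ window E p q ++ B := by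
  obtain ⟨hJ, hmax, hlast⟩ := lastDeep_spec v
  generalize lastDeep v = J at hJ hmax hlast
  have hJlt : J < v.length := by
    refine lt_of_le_of_ne hJ fun hJv => ?_
    have h0 := hmax 0
    rw [hJv, depth_eq_totalDepth_take, depth_eq_totalDepth_take, take_length] at h0
    simp at h0
    omega
  have hstep := depth_succ hJlt
  have hE : v[J] = E := by
    have hlt := hlast (J + 1) (by omega) (by omega)
    cases hx : v[J]
    · rfl
    · rw [hx, totalDepth_singleton_D] at hstep; omega
    · rw [hx, totalDepth_singleton_N] at hstep; omega
  obtain ⟨A, B, p, q, hv', hk, hA, hB⟩ := exists_eq_append_window v hJlt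
  rw [hE] at hv'
  subst hv'
  have hpeak : depth (A ++ window E p q ++ B) J = totalDepth A := by
    rw [← hk, depth_append_window_of_le A B E le_rfl, take_of_length_le (by omega)]
  refine ⟨A, B, p, q, ⟨fun i => ?_, fun i => ?_, hA, hB⟩, rfl⟩
  · have hle := hmax (min i A.length)
    rw [hpeak, depth_append_window_of_le A B E (by omega), ← take_eq_take_min] at hle
    exact hle
  · have hlt := hlast (A.length + p + q + 1 + min i B.length) (by simp; omega) (by omega)
    rw [hpeak, depth_append_window_add, totalDepth_singleton_E, ← take_eq_take_min] at hlt
    omega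

def IsDescentAt (rank : Step → ℕ) (w : List Step) (j : ℕ) : Prop :=
  rank (w.getD (j + 1) E) < rank (w.getD j E)

theorem maj_congr {rank : Step → ℕ} {u v : List Step} (hlen : u.length = v.length)
    (h : ∀ j, j + 1 < u.length → (IsDescentAt rank u j ↔ IsDescentAt rank v j)) :
    maj rank u = maj rank v := by
  unfold maj
  rw [← hlen]
  refine Finset.sum_congr rfl fun j hj => ?_
  rw [Finset.mem_range] at hj
  exact if_congr (h j (by omega)) rfl rfl

theorem getD_append_append (A W B : List Step) (j : ℕ) (d : Step) :
    (A ++ W ++ B).getD j d =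
      if j < A.length then A.getD j d
      else if j < A.length + W.length then W.getD (j - A.length) d
      else B.getD (j - A.length - W.length) d := by
  rw [append_assoc]
  split_ifs with h₁ h₂
  · exact getD_append _ _ _ _ h₁
  · rw [getD_append_right _ _ _ _ (by omega), getD_append _ _ _ _ (by omega)]
  · rw [getD_append_right _ _ _ _ (by omega), getD_append_right _ _ _ _ (by omega), Nat.sub_sub]

theorem maj_append_append_congr {rank : Step → ℕ} (hN : ∀ y, rank N ≤ rank y)
    (hE : ∀ y, rank y ≤ rank E) {A B W W' : List Step} (hA : ∀ a ∈ A.getLast?, a = N)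
    (hB : ∀ b ∈ B.head?, b = E) (hlen : W.length = W'.length)
    (hW : ∀ t, t + 1 < W.length → (IsDescentAt rank W t ↔ IsDescentAt rank W' t)) :
    maj rank (A ++ W ++ B) = maj rank (A ++ W' ++ B) := by
  refine maj_congr (by simp [hlen]) fun j _ => ?_
  simp only [IsDescentAt, getD_append_append, ← hlen]
  rcases lt_or_ge (j + 1) A.length with h₁ | h₁
  · simp [h₁, show j < A.length by omega]
  rcases lt_or_ge j A.length with h₂ | h₂
  · have hAj : A.getD j E = N := hA _ <| by
      rw [Option.mem_def, getLast?_eq_getElem?, show A.length - 1 = j by omega,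
        getElem?_eq_getElem h₂, getD_eq_getElem]
    simp only [if_pos h₂, if_neg (not_lt.2 h₁), hAj]
    exact iff_of_false (not_lt.2 (hN _)) (not_lt.2 (hN _))
  rcases lt_or_ge (j + 1) (A.length + W.length) with h₃ | h₃
  · simp only [if_neg (not_lt.2 h₁), if_neg (not_lt.2 h₂), if_pos h₃,
      if_pos (by omega : j < A.length + W.length), show j + 1 - A.length = j - A.length + 1 by omega]
    exact hW _ (by omega)
  rcases lt_or_ge j (A.length + W.length) with h₄ | h₄
  · have hB0 : B.getD (j + 1 - A.length - W.length) E = E := by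
      rw [show j + 1 - A.length - W.length = 0 by omega, getD_eq_getElem?_getD,
        ← head?_eq_getElem?]
      cases hb : B.head? with
      | none => rfl
      | some b => exact hB b hb
    simp only [if_neg (not_lt.2 h₁), if_neg (not_lt.2 h₂), if_neg (not_lt.2 h₃), if_pos h₄,
      hB0]
    exact iff_of_false (not_lt.2 (hE _)) (not_lt.2 (hE _))
  · simp only [if_neg (not_lt.2 h₁), if_neg (not_lt.2 h₂), if_neg (not_lt.2 h₃),
      if_neg (not_lt.2 h₄)]

theorem getD_window (x : Step) (r s t : ℕ) :
    (window x r s).getD t E =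
      if t < r then D else if t = r then x else if t < r + s + 1 then D else E := by
  rw [window]
  rcases lt_or_ge t r with h₁ | h₁
  · rw [getD_append _ _ _ _ (by simpa), getD_replicate _ h₁, if_pos h₁]
  rw [getD_append_right _ _ _ _ (by simpa), length_replicate, if_neg (not_lt.2 h₁)]
  obtain rfl | h₂ := eq_or_lt_of_le h₁
  · simp
  rw [show t - r = t - r - 1 + 1 by omega, getD_cons_succ, if_neg (by omega)]
  rcases lt_or_ge t (r + s + 1) with h₃ | h₃
  · rw [getD_replicate _ (by omega), if_pos h₃]
  · rw [getD_eq_default _ _ (by simp; omega), if_neg (not_lt.2 h₃)]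

theorem isDescentAt_phiWindow_iff {rank : Step → ℕ} (hND : rank N < rank D)
    (hDE : rank D < rank E) (r s t : ℕ) :
    IsDescentAt rank (phiWindow r s) t ↔ IsDescentAt rank (window N r s) t := by
  unfold IsDescentAt phiWindow
  split_ifs <;> simp only [getD_window] <;> split_ifs <;> omega

theorem maj_phiWin {rank : Step → ℕ} (hND : rank N < rank D) (hDE : rank D < rank E)
    {w : List Step} (hw : bad w = true) : maj rank (phiWin w) = maj rank w := by
  obtain ⟨A, B, r, s, h, rfl⟩ := exists_flanked_of_bad hw
  rw [h.phiWin_append_window]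
  refine maj_append_append_congr (fun y => by cases y <;> omega) (fun y => by cases y <;> omega)
    h.getLast?_eq_N h.head?_eq_E (by simp [length_phiWindow]) fun t _ => ?_
  exact isDescentAt_phiWindow_iff hND hDE r s t

theorem phiWinInv_phiWin {w : List Step} (hw : bad w = true) : phiWinInv (phiWin w) = w := by
  obtain ⟨A, B, r, s, h, rfl⟩ := exists_flanked_of_bad hw
  obtain ⟨p, q, hE, -, hN⟩ := exists_phiWindow_eq r s
  rw [h.phiWin_append_window, hE, h.phiWinInv_append_window, hN]

theorem phiWin_phiWinInv {v : List Step} (hv : totalDepth v < 0) : phiWin (phiWinInv v) = v := by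
  obtain ⟨A, B, p, q, h, rfl⟩ := exists_flanked_of_totalDepth_neg hv
  obtain ⟨r, s, hN, -, hE⟩ := exists_phiWindowInv_eq p q
  rw [h.phiWinInv_append_window, hN, h.phiWin_append_window, hE]

theorem phiWin_mem_DelSet {n l : ℕ} (hn : 1 ≤ n) {w : List Step} (hw : w ∈ BDelSet n l) :
    phiWin w ∈ DelSet (n + 1) (n - 1) l := by
  obtain ⟨k, rfl⟩ : ∃ k, n = k + 1 := ⟨n - 1, by omega⟩
  obtain ⟨hDel, hbad⟩ := Finset.mem_filter.1 hw
  obtain ⟨A, B, r, s, h, rfl⟩ := exists_flanked_of_bad hbad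
  obtain ⟨p, q, hE, hpq, -⟩ := exists_phiWindow_eq r s
  rw [h.phiWin_append_window, hE, Nat.add_sub_cancel]
  exact (append_window_mem_DelSet_iff hpq).2 hDel

theorem phiWinInv_mem_BDelSet {n l : ℕ} (hn : 1 ≤ n) {v : List Step}
    (hv : v ∈ DelSet (n + 1) (n - 1) l) : phiWinInv v ∈ BDelSet n l := by
  obtain ⟨k, rfl⟩ : ∃ k, n = k + 1 := ⟨n - 1, by omega⟩
  rw [Nat.add_sub_cancel] at hv
  have hneg : totalDepth v < 0 := by
    rw [totalDepth_of_mem_DelSet hv]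
    omega
  obtain ⟨A, B, p, q, h, rfl⟩ := exists_flanked_of_totalDepth_neg hneg
  obtain ⟨r, s, hN, hrs, -⟩ := exists_phiWindowInv_eq p q
  rw [h.phiWinInv_append_window, hN]
  exact Finset.mem_filter.2
    ⟨(append_window_mem_DelSet_iff hrs.symm).1 hv, h.bad_append_window r s⟩

end Delannoy

theorem phiWin_NDE_general (n l : ℕ) (hn : 1 ≤ n)
    (rank : Step → ℕ)
    (hND : rank N < rank D) (hDE : rank D < rank E) :
    Set.BijOn phiWin (BDelSet n l : Set (List Step)) (DelSet (n + 1) (n - 1) l : Set (List Step)) ∧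
      ∀ w ∈ BDelSet n l, maj rank w = maj rank (phiWin w) := by
  have hneg : ∀ v ∈ DelSet (n + 1) (n - 1) l, Delannoy.totalDepth v < 0 := fun v hv => by
    rw [Delannoy.totalDepth_of_mem_DelSet hv]
    omega
  have hinv : Set.InvOn Delannoy.phiWinInv phiWin (BDelSet n l) (DelSet (n + 1) (n - 1) l) :=
    ⟨fun w hw => Delannoy.phiWinInv_phiWin (Finset.mem_filter.1 hw).2,
      fun v hv => Delannoy.phiWin_phiWinInv (hneg v hv)⟩
  exact ⟨hinv.bijOn (fun w hw => Delannoy.phiWin_mem_DelSet hn hw)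
      (fun v hv => Delannoy.phiWinInv_mem_BDelSet hn hv),
    fun w hw => (Delannoy.maj_phiWin hND hDE (Finset.mem_filter.1 hw).2).symm⟩

/-- for the order N < D < E, the window map φ is a bijection from
bad paths in Del(n,n,l) onto Del(n+1,n-1,l), with maj(W) = maj(φ(W)). -/
theorem phiWin_NDE (n l : ℕ) (hn : 1 ≤ n)
    (rank : Step → ℕ) (hrank : Function.Injective rank)
    (hND : rank N < rank D) (hDE : rank D < rank E) :
    Set.BijOn phiWin (BDelSet n l : Set (List Step)) (DelSet (n + 1) (n - 1) l : Set (List Step)) ∧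
      ∀ w ∈ BDelSet n l, maj rank w = maj rank (phiWin w) :=
  phiWin_NDE_general n l hn rank hND hDE
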